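/- Let γ : ℝ/(Lℤ) → ℝ³ be a C³ closed curve with Frenet frame (t, n, b) and nonvanishing curvature, and let w be a unit vector with w ≠ ±b(s₀). If the orthogonal projection of γ onto the plane w⊥ has an inflection point or cusp at s₀ — meaning the projected velocity and projected acceleration are linearly dependent at s₀ — then b(s₀) · w = 0. -/

import Mathlib

open Matrix

/-!
Write `P v = v - (v ⬝ᵥ w) • w`. Since `P` is linear, the dependence `a • P γ' + c • P γ'' = 0`
says that `y = a • t + c • κ n` is a multiple of `w`. The binormal is orthogonal to `t` and `n`,
hence to `y`; so if `b ⬝ᵥ w ≠ 0` then `y = 0`, which is impossible because `t` and `κ n` are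
nonzero and orthogonal.
-/

theorem HasDerivAt.dotProduct {𝕜 ι : Type*} [NontriviallyNormedField 𝕜] [Fintype ι]
    {f g : 𝕜 → ι → 𝕜} {f' g' : ι → 𝕜} {s : 𝕜}
    (hf : HasDerivAt f f' s) (hg : HasDerivAt g g' s) :
    HasDerivAt (fun u => f u ⬝ᵥ g u) (f' ⬝ᵥ g s + f s ⬝ᵥ g') s := by
  have hfg := HasDerivAt.fun_sum (u := Finset.univ) fun i _ =>
    (hasDerivAt_pi.mp hf i).fun_mul (hasDerivAt_pi.mp hg i)
  simpa only [_root_.dotProduct, ← Finset.sum_add_distrib] using hfg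

theorem dotProduct_deriv_eq_zero_of_dotProduct_self_eq {ι : Type*} [Fintype ι]
    {f : ℝ → ι → ℝ} {r s : ℝ} (hconst : ∀ u, f u ⬝ᵥ f u = r) (hf : DifferentiableAt ℝ f s) :
    f s ⬝ᵥ deriv f s = 0 := by
  have hderiv := hf.hasDerivAt.dotProduct hf.hasDerivAt
  simp only [hconst] at hderiv
  have htwice : 2 * (f s ⬝ᵥ deriv f s) = 0 := by
    rw [two_mul]
    nth_rewrite 1 [dotProduct_comm]
    exact (hasDerivAt_const s r).unique hderiv |>.symm
  simpa using htwice

theorem eq_zero_of_smul_add_smul_eq_zero {ι : Type*} [Fintype ι] {u v : ι → ℝ} {a c : ℝ}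
    (hu : u ≠ 0) (hv : v ≠ 0) (huv : u ⬝ᵥ v = 0) (h : a • u + c • v = 0) :
    a = 0 ∧ c = 0 := by
  have hau : a * (u ⬝ᵥ u) = 0 := by
    simpa [add_dotProduct, smul_dotProduct, dotProduct_comm v u, huv] using
      congrArg (· ⬝ᵥ u) h
  have ha : a = 0 := (mul_eq_zero.mp hau).resolve_right (mt dotProduct_self_eq_zero.mp hu)
  subst ha
  exact ⟨rfl, (smul_eq_zero.mp (by simpa using h)).resolve_right hv⟩

theorem dotProduct_eq_zero_of_projections_dependent {ι : Type*} [Fintype ι]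
    {u v w x : ι → ℝ} {a c : ℝ} (hu : u ≠ 0) (hv : v ≠ 0) (huv : u ⬝ᵥ v = 0)
    (hux : u ⬝ᵥ x = 0) (hvx : v ⬝ᵥ x = 0) (hac : (a, c) ≠ (0, 0))
    (h : a • (u - (u ⬝ᵥ w) • w) + c • (v - (v ⬝ᵥ w) • w) = 0) :
    x ⬝ᵥ w = 0 := by
  set y := a • u + c • v with hy
  have hyw : y = (y ⬝ᵥ w) • w := by
    rw [← sub_eq_zero, ← h, hy, add_dotProduct, smul_dotProduct, smul_dotProduct]
    module
  have hyx : y ⬝ᵥ x = 0 := by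
    simp only [hy, add_dotProduct, smul_dotProduct, hux, hvx, smul_zero, add_zero]
  by_contra hxw
  have hyw0 : y ⬝ᵥ w = 0 := by
    rw [hyw, smul_dotProduct, dotProduct_comm w x, smul_eq_mul] at hyx
    exact (mul_eq_zero.mp hyx).resolve_right hxw
  rw [hyw0, zero_smul] at hyw
  obtain ⟨rfl, rfl⟩ := eq_zero_of_smul_add_smul_eq_zero hu hv huv hyw
  exact hac rfl

theorem stmt_11_general (γ t n b : ℝ → Fin 3 → ℝ) (κ : ℝ → ℝ) (w : Fin 3 → ℝ) (s₀ : ℝ)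
    (ht : ∀ s, t s = deriv γ s)
    (hunit_t : ∀ s, t s ⬝ᵥ t s = 1) (hunit_n : ∀ s, n s ⬝ᵥ n s = 1)
    (hκ : ∀ s, deriv t s = κ s • n s) (hκne : ∀ s, κ s ≠ 0)
    (hb : ∀ s, b s = t s ⨯₃ n s)
    (hdep : ∃ a c : ℝ, (a, c) ≠ (0, 0) ∧
      a • (deriv γ s₀ - (deriv γ s₀ ⬝ᵥ w) • w) +
        c • (deriv (deriv γ) s₀ - (deriv (deriv γ) s₀ ⬝ᵥ w) • w) = 0) :
    b s₀ ⬝ᵥ w = 0 := by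
  obtain ⟨a, c, hac, hproj⟩ := hdep
  rw [← funext ht] at hproj
  have ht_ne : t s₀ ≠ 0 := fun h => by simpa [h] using hunit_t s₀
  have hn_ne : n s₀ ≠ 0 := fun h => by simpa [h] using hunit_n s₀
  have ht'_ne : deriv t s₀ ≠ 0 := by rw [hκ]; exact smul_ne_zero (hκne s₀) hn_ne
  have ht_t' : t s₀ ⬝ᵥ deriv t s₀ = 0 :=
    -- `deriv` is junk `0` where `t` is not differentiable, so `deriv t s₀ ≠ 0` rules that out.
    dotProduct_deriv_eq_zero_of_dotProduct_self_eq hunit_t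
      (differentiableAt_of_deriv_ne_zero ht'_ne)
  have ht_b : t s₀ ⬝ᵥ b s₀ = 0 := by rw [hb]; exact dot_self_cross _ _
  have ht'_b : deriv t s₀ ⬝ᵥ b s₀ = 0 := by
    rw [hκ, hb, smul_dotProduct, dot_cross_self, smul_zero]
  exact dotProduct_eq_zero_of_projections_dependent ht_ne ht'_ne ht_t' ht_b ht'_b hac hproj

/-- If the planar projection of a curve has an inflection point or cusp at s₀,
then the binormal at s₀ is orthogonal to the projection direction. -/
theorem stmt_11 (γ t n b : ℝ → Fin 3 → ℝ) (κ : ℝ → ℝ) (w : Fin 3 → ℝ) (s₀ : ℝ)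
    (hγ : ContDiff ℝ 3 γ)
    (ht : ∀ s, t s = deriv γ s)
    (hunit_t : ∀ s, t s ⬝ᵥ t s = 1) (hunit_n : ∀ s, n s ⬝ᵥ n s = 1)
    (hκ : ∀ s, deriv t s = κ s • n s) (hκne : ∀ s, κ s ≠ 0)
    (hb : ∀ s, b s = t s ⨯₃ n s)
    (hw : w ⬝ᵥ w = 1) (hwb : w ≠ b s₀) (hwb' : w ≠ -b s₀)
    (hdep : ∃ a c : ℝ, (a, c) ≠ (0, 0) ∧
      a • (deriv γ s₀ - (deriv γ s₀ ⬝ᵥ w) • w) +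
        c • (deriv (deriv γ) s₀ - (deriv (deriv γ) s₀ ⬝ᵥ w) • w) = 0) :
    b s₀ ⬝ᵥ w = 0 :=
  stmt_11_general γ t n b κ w s₀ ht hunit_t hunit_n hκ hκne hb hdep
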